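/- arXiv:2103.13731 — 4 statements merged into one kernel-verified Lean document; each statement's English description precedes it below -/
import Mathlib

section
/- Let Γ be a Z-grading of K[x_1,...,x_n] in which each variable x_i is homogeneous of a strictly positive degree. Then every Γ-graded automorphism of K[x_1,...,x_n] is graded-tame, i.e., a composition of Γ-graded elementary and Γ-graded linear automorphisms. -/
open MvPolynomial

/-- An automorphism of `K[x_1,…,x_n]` is *elementary* if it sends some variable `x_i` to
`x_i + F`, where `F` is a polynomial in the remaining variables, and fixes the other variables. -/
def IsElementary {K : Type*} [CommRing K] {n : ℕ}
    (φ : MvPolynomial (Fin n) K ≃ₐ[K] MvPolynomial (Fin n) K) : Prop :=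
  ∃ (i : Fin n) (F : MvPolynomial (Fin n) K), i ∉ F.vars ∧
    φ (X i) = X i + F ∧ ∀ j : Fin n, j ≠ i → φ (X j) = X j

/-- An automorphism of `K[x_1,…,x_n]` is *linear* if it sends each variable to a
`K`-linear combination of the variables. -/
def IsLinearAut {K : Type*} [CommRing K] {n : ℕ}
    (φ : MvPolynomial (Fin n) K ≃ₐ[K] MvPolynomial (Fin n) K) : Prop :=
  ∀ i : Fin n, ∃ c : Fin n → K, φ (X i) = ∑ j : Fin n, C (c j) * X j

/-- For the `ℤ`-grading of `K[x_1,…,x_n]` with `deg x_i = w i`, an automorphism is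
*graded* if it maps each homogeneous component into itself. -/
def IsGraded {K : Type*} [CommRing K] {n : ℕ} (w : Fin n → ℤ)
    (φ : MvPolynomial (Fin n) K ≃ₐ[K] MvPolynomial (Fin n) K) : Prop :=
  ∀ (d : ℤ) (f : MvPolynomial (Fin n) K),
    f.IsWeightedHomogeneous w d → (φ f).IsWeightedHomogeneous w d

/-- A graded automorphism is *graded-tame* if it is a composition of graded elementary
and graded linear automorphisms. -/
def IsGradedTame {K : Type*} [CommRing K] {n : ℕ} (w : Fin n → ℤ)
    (φ : MvPolynomial (Fin n) K ≃ₐ[K] MvPolynomial (Fin n) K) : Prop :=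
  ∃ l : List (MvPolynomial (Fin n) K ≃ₐ[K] MvPolynomial (Fin n) K),
    (∀ ψ ∈ l, IsGraded w ψ ∧ (IsElementary ψ ∨ IsLinearAut ψ)) ∧ φ = l.prod

/-!
With positive weights, a graded automorphism `φ` sends `X i` to a weighted homogeneous
polynomial of degree `w i ≠ 0`, hence without constant term. Taking linear parts is then
multiplicative (a chain rule for degree-one coefficients), so the linear part of `φ` is a graded
linear automorphism `L`, and `ψ = L⁻¹ φ` has identity linear part. Thus `ψ (X i) = X i + Q` with
`Q` homogeneous of degree `w i` and free of linear terms; positivity of the weights forces every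
variable of `Q` to have weight `< w i`, so `X i ↦ X i + Q` is a graded elementary automorphism.
Dividing it out of `ψ` fixes `X i` and every variable `ψ` already fixed, and induction on the set
of moved variables finishes.
-/

namespace MvPolynomial

variable {R σ : Type*} [CommRing R]

theorem coeff_single_one_mul (k : σ) (p q : MvPolynomial σ R) :
    coeff (Finsupp.single k 1) (p * q) =
      constantCoeff p * coeff (Finsupp.single k 1) q +
        coeff (Finsupp.single k 1) p * constantCoeff q := by
  classical
  simp [coeff_mul, Finsupp.antidiagonal_single, constantCoeff_eq, Finset.Nat.antidiagonal_succ]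

theorem constantCoeff_map_of_constantCoeff_X {α : MvPolynomial σ R →ₐ[R] MvPolynomial σ R}
    (hα : ∀ j, constantCoeff (α (X j)) = 0) (p : MvPolynomial σ R) :
    constantCoeff (α p) = constantCoeff p := by
  have : constantCoeff.comp (α : MvPolynomial σ R →+* MvPolynomial σ R) = constantCoeff :=
    ringHom_ext (fun r => by simp) (fun j => by simpa using hα j)
  exact RingHom.congr_fun this p

theorem constantCoeff_symm_X {φ : MvPolynomial σ R ≃ₐ[R] MvPolynomial σ R}
    (hφ : ∀ j, constantCoeff (φ (X j)) = 0) (j : σ) : constantCoeff (φ.symm (X j)) = 0 := by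
  simpa using (constantCoeff_map_of_constantCoeff_X (α := (φ : _ →ₐ[R] _)) hφ (φ.symm (X j))).symm

theorem IsWeightedHomogeneous.map_of_isWeightedHomogeneous_X {M : Type*} [AddCommMonoid M]
    {w : σ → M} {α : MvPolynomial σ R →ₐ[R] MvPolynomial σ R}
    (hα : ∀ j, (α (X j)).IsWeightedHomogeneous w (w j)) {p : MvPolynomial σ R} {m : M}
    (hp : p.IsWeightedHomogeneous w m) : (α p).IsWeightedHomogeneous w m := by
  induction hp using IsWeightedHomogeneous.induction_on with
  | zero => simpa using isWeightedHomogeneous_zero R w m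
  | add p q _ _ hp hq => simpa using hp.add hq
  | monomial d r hd =>
    rw [monomial_eq, map_mul, algHom_C, Finsupp.prod, map_prod, ← hd, Finsupp.weight_apply,
      Finsupp.sum]
    refine IsWeightedHomogeneous.C_mul (IsWeightedHomogeneous.prod _ _ _ fun j _ => ?_) r
    simpa using (hα j).pow (d j)

section Elementary

variable [DecidableEq σ]

theorem aeval_update_X_of_notMem_vars {i : σ} {p : MvPolynomial σ R}
    (hi : i ∉ p.vars) (q : MvPolynomial σ R) : aeval (Function.update X i q) p = p := by
  calc aeval (Function.update X i q) p = aeval X p := by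
        refine hom_congr_vars (f₁ := (aeval _).toRingHom) (f₂ := (aeval X).toRingHom) ?_ ?_ rfl
        · ext; simp
        · intro j hj _
          simp [Function.update_of_ne (ne_of_mem_of_not_mem hj hi)]
    _ = p := aeval_X_left_apply p

noncomputable def elementaryEquiv (i : σ) (F : MvPolynomial σ R) (hF : i ∉ F.vars) :
    MvPolynomial σ R ≃ₐ[R] MvPolynomial σ R :=
  AlgEquiv.ofAlgHom (aeval (Function.update X i (X i + F)))
    (aeval (Function.update X i (X i - F)))
    (algHom_ext fun j => by
      obtain rfl | hj := eq_or_ne j i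
      · simp only [AlgHom.comp_apply, aeval_X, Function.update_self, map_sub,
          aeval_update_X_of_notMem_vars hF, AlgHom.id_apply]
        ring
      · simp [Function.update_of_ne hj])
    (algHom_ext fun j => by
      obtain rfl | hj := eq_or_ne j i
      · simp only [AlgHom.comp_apply, aeval_X, Function.update_self, map_add,
          aeval_update_X_of_notMem_vars hF, AlgHom.id_apply]
        ring
      · simp [Function.update_of_ne hj])

@[simp]
theorem elementaryEquiv_apply_X (i : σ) (F : MvPolynomial σ R) (hF : i ∉ F.vars) (j : σ) :
    elementaryEquiv i F hF (X j) = Function.update X i (X i + F) j :=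
  aeval_X _ j

end Elementary

variable [Fintype σ]

noncomputable def linearPart : MvPolynomial σ R →ₗ[R] MvPolynomial σ R :=
  ∑ k, (lcoeff R (Finsupp.single k 1)).smulRight (X k)

theorem linearPart_apply (p : MvPolynomial σ R) :
    linearPart p = ∑ k, C (coeff (Finsupp.single k 1) p) * X k := by
  simp [linearPart, smul_eq_C_mul]

theorem coeff_single_one_linearPart (k : σ) (p : MvPolynomial σ R) :
    coeff (Finsupp.single k 1) (linearPart p) = coeff (Finsupp.single k 1) p := by
  classical
  simp [linearPart_apply, coeff_sum, coeff_X, Finsupp.single_left_inj one_ne_zero]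

theorem linearPart_linearPart (p : MvPolynomial σ R) :
    linearPart (linearPart p) = linearPart p := by
  simp only [linearPart_apply (linearPart p), coeff_single_one_linearPart, ← linearPart_apply]

theorem linearPart_C (r : R) : linearPart (C r : MvPolynomial σ R) = 0 := by
  classical
  simp [linearPart_apply, coeff_C, (Finsupp.single_ne_zero.mpr one_ne_zero).symm]

theorem linearPart_X (i : σ) : linearPart (X i : MvPolynomial σ R) = X i := by
  classical
  simp [linearPart_apply, coeff_X, Finsupp.single_left_inj one_ne_zero]

theorem linearPart_mul (p q : MvPolynomial σ R) :
    linearPart (p * q) =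
      C (constantCoeff p) * linearPart q + C (constantCoeff q) * linearPart p := by
  simp only [linearPart_apply, coeff_single_one_mul, Finset.mul_sum, ← Finset.sum_add_distrib,
    ← mul_assoc, ← C_mul, ← add_mul, ← C_add]
  congr! 3
  ring

theorem IsWeightedHomogeneous.linearPart {M : Type*} [AddCommMonoid M] {w : σ → M} {m : M}
    {p : MvPolynomial σ R} (hp : p.IsWeightedHomogeneous w m) :
    (linearPart p).IsWeightedHomogeneous w m := by
  rw [linearPart_apply]
  refine IsWeightedHomogeneous.sum _ _ _ fun k _ => ?_
  by_cases hk : coeff (Finsupp.single k 1) p = 0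
  · simpa [hk] using isWeightedHomogeneous_zero R w m
  · rw [← hp hk, Finsupp.weight_single, one_smul]
    exact (isWeightedHomogeneous_X R w k).C_mul _

theorem IsWeightedHomogeneous.weight_lt_of_mem_vars {M : Type*} [AddCommMonoid M]
    [PartialOrder M] [IsOrderedCancelAddMonoid M] {w : σ → M} (hw : ∀ i, 0 < w i)
    {p : MvPolynomial σ R} {m : M} (hp : p.IsWeightedHomogeneous w m)
    (hlin : MvPolynomial.linearPart p = 0) {j : σ} (hj : j ∈ p.vars) : w j < m := by
  obtain ⟨d, hd, hjd⟩ := (mem_vars_iff_mem_support j).mp hj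
  have hd0 : coeff d p ≠ 0 := mem_support_iff.mp hd
  have hle : Finsupp.single j 1 ≤ d :=
    Finsupp.single_le_iff.mpr (Nat.one_le_iff_ne_zero.mpr (Finsupp.mem_support_iff.mp hjd))
  obtain ⟨k, hk⟩ : ∃ k, (d - Finsupp.single j 1 : σ →₀ ℕ) k ≠ 0 := by
    by_contra! h
    have hdj : d = Finsupp.single j 1 :=
      le_antisymm (tsub_eq_zero_iff_le.mp (Finsupp.ext h)) hle
    apply hd0
    rw [hdj, ← coeff_single_one_linearPart, hlin, coeff_zero]
  calc w j < w j + Finsupp.weight w (d - Finsupp.single j 1) :=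
        lt_add_of_pos_right _
          ((hw k).trans_le (Finsupp.le_weight_of_ne_zero (fun i => (hw i).le) hk))
    _ = Finsupp.weight w d := by
        conv_rhs => rw [← add_tsub_cancel_of_le hle]
        rw [map_add, Finsupp.weight_single, one_smul]
    _ = m := hp hd0

noncomputable def linearization (α : MvPolynomial σ R →ₐ[R] MvPolynomial σ R) :
    MvPolynomial σ R →ₐ[R] MvPolynomial σ R :=
  aeval fun i => linearPart (α (X i))

@[simp]
theorem linearization_X (α : MvPolynomial σ R →ₐ[R] MvPolynomial σ R) (i : σ) :
    linearization α (X i) = linearPart (α (X i)) :=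
  aeval_X _ i

theorem linearPart_map {α : MvPolynomial σ R →ₐ[R] MvPolynomial σ R}
    (hα : ∀ j, constantCoeff (α (X j)) = 0) (p : MvPolynomial σ R) :
    linearPart (α p) = linearization α (linearPart p) := by
  induction p using MvPolynomial.induction_on with
  | C r => simp [linearPart_C]
  | add p q hp hq => simp only [map_add, hp, hq]
  | mul_X p j _ =>
    simp [linearPart_mul, linearPart_X, hα j, constantCoeff_map_of_constantCoeff_X hα]

theorem linearization_comp (α : MvPolynomial σ R →ₐ[R] MvPolynomial σ R)
    {β : MvPolynomial σ R →ₐ[R] MvPolynomial σ R} (hβ : ∀ j, constantCoeff (β (X j)) = 0) :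
    linearization (β.comp α) = (linearization β).comp (linearization α) :=
  algHom_ext fun i => by simp [linearPart_map hβ]

theorem linearization_id : linearization (AlgHom.id R (MvPolynomial σ R)) = AlgHom.id R _ :=
  algHom_ext fun i => by simp [linearPart_X]

theorem linearization_linearization (α : MvPolynomial σ R →ₐ[R] MvPolynomial σ R) :
    linearization (linearization α) = linearization α :=
  algHom_ext fun i => by simp [linearPart_linearPart]

noncomputable def linearizationEquiv (φ : MvPolynomial σ R ≃ₐ[R] MvPolynomial σ R)
    (hφ : ∀ j, constantCoeff (φ (X j)) = 0) : MvPolynomial σ R ≃ₐ[R] MvPolynomial σ R :=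
  AlgEquiv.ofAlgHom (linearization φ) (linearization φ.symm)
    (by rw [← linearization_comp _ hφ, AlgEquiv.comp_symm, linearization_id])
    (by rw [← linearization_comp _ (constantCoeff_symm_X hφ), AlgEquiv.symm_comp,
      linearization_id])

@[simp]
theorem linearizationEquiv_apply_X (φ : MvPolynomial σ R ≃ₐ[R] MvPolynomial σ R)
    (hφ : ∀ j, constantCoeff (φ (X j)) = 0) (i : σ) :
    linearizationEquiv φ hφ (X i) = linearPart (φ (X i)) :=
  linearization_X _ i

theorem linearization_linearizationEquiv (φ : MvPolynomial σ R ≃ₐ[R] MvPolynomial σ R)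
    (hφ : ∀ j, constantCoeff (φ (X j)) = 0) :
    linearization (linearizationEquiv φ hφ : MvPolynomial σ R →ₐ[R] MvPolynomial σ R) =
      linearization φ :=
  linearization_linearization _

end MvPolynomial

section Graded

variable {R : Type*} [CommRing R] {n : ℕ} {w : Fin n → ℤ}

local notation "P" => MvPolynomial (Fin n) R

theorem isGraded_iff {α : P ≃ₐ[R] P} :
    IsGraded w α ↔ ∀ j, (α (X j)).IsWeightedHomogeneous w (w j) :=
  ⟨fun h j => h _ _ (isWeightedHomogeneous_X R w j),
    fun h _ _ hf => hf.map_of_isWeightedHomogeneous_X (α := (α : P →ₐ[R] P)) h⟩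

theorem IsGraded.mul {χ ψ : P ≃ₐ[R] P} (hχ : IsGraded w χ) (hψ : IsGraded w ψ) :
    IsGraded w (χ * ψ) :=
  fun d f hf => hχ d _ (hψ d f hf)

theorem IsGraded.weightedHomogeneousComponent_map {φ : P ≃ₐ[R] P} (hφ : IsGraded w φ)
    (d : ℤ) (p : P) :
    weightedHomogeneousComponent w d (φ p) = φ (weightedHomogeneousComponent w d p) := by
  classical
  induction p using MvPolynomial.induction_on' with
  | monomial e r =>
    have he := isWeightedHomogeneous_monomial w e r rfl
    rw [weightedHomogeneousComponent_of_mem (hφ _ _ he), weightedHomogeneousComponent_of_mem he]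
    split_ifs <;> simp
  | add p q hp hq => simp only [map_add, hp, hq]

theorem IsGraded.inv {φ : P ≃ₐ[R] P} (hφ : IsGraded w φ) : IsGraded w φ⁻¹ := by
  intro d f hf e he
  by_contra hne
  have hcomp : weightedHomogeneousComponent w (Finsupp.weight w e) (φ⁻¹ f) = 0 := by
    apply φ.injective
    rw [← hφ.weightedHomogeneousComponent_map, ← AlgEquiv.mul_apply, mul_inv_cancel,
      AlgEquiv.one_apply, hf.weightedHomogeneousComponent_ne _ hne, map_zero]
  have := congr_arg (coeff e) hcomp
  rw [coeff_weightedHomogeneousComponent, if_pos rfl, coeff_zero] at this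
  exact he this

theorem IsGraded.constantCoeff_X (hw : ∀ i, w i ≠ 0) {φ : P ≃ₐ[R] P} (hφ : IsGraded w φ)
    (j : Fin n) : constantCoeff (φ (X j)) = 0 := by
  rw [constantCoeff_eq]
  exact (hφ _ _ (isWeightedHomogeneous_X R w j)).coeff_eq_zero 0
    (by rw [map_zero]; exact (hw j).symm)

theorem linearization_inv_mul_eq_id (hw : ∀ i, w i ≠ 0) {χ ψ : P ≃ₐ[R] P} (hχ : IsGraded w χ)
    (h : linearization (χ : P →ₐ[R] P) = linearization (ψ : P →ₐ[R] P)) :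
    linearization ((χ⁻¹ * ψ : P ≃ₐ[R] P) : P →ₐ[R] P) = AlgHom.id R P := by
  have hcc := hχ.inv.constantCoeff_X hw
  calc linearization ((χ⁻¹ * ψ : P ≃ₐ[R] P) : P →ₐ[R] P)
      = linearization ((χ.symm : P →ₐ[R] P).comp ψ) := congrArg _ (AlgHom.ext fun _ => rfl)
    _ = (linearization (χ.symm : P →ₐ[R] P)).comp (linearization χ) := by
        rw [linearization_comp _ hcc, h]
    _ = AlgHom.id R P := by
        rw [← linearization_comp _ hcc, AlgEquiv.symm_comp, linearization_id]

theorem isGraded_elementaryEquiv {i : Fin n} {F : P} (hF : i ∉ F.vars)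
    (hFw : F.IsWeightedHomogeneous w (w i)) : IsGraded w (elementaryEquiv i F hF) := by
  refine isGraded_iff.mpr fun j => ?_
  obtain rfl | hj := eq_or_ne j i
  · simpa using (isWeightedHomogeneous_X R w j).add hFw
  · simpa [Function.update_of_ne hj] using isWeightedHomogeneous_X R w j

theorem linearization_elementaryEquiv {i : Fin n} {F : P} (hF : i ∉ F.vars)
    (hlin : linearPart F = 0) :
    linearization (elementaryEquiv i F hF : P →ₐ[R] P) = AlgHom.id R P := by
  refine algHom_ext fun j => ?_
  obtain rfl | hj := eq_or_ne j i
  · simp [linearPart_X, hlin]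
  · simp [Function.update_of_ne hj, linearPart_X]

theorem isElementary_elementaryEquiv (i : Fin n) (F : P) (hF : i ∉ F.vars) :
    IsElementary (elementaryEquiv i F hF) :=
  ⟨i, F, hF, by simp, fun j hj => by simp [Function.update_of_ne hj]⟩

theorem IsGraded.linearizationEquiv {φ : P ≃ₐ[R] P} (hφ : IsGraded w φ)
    (hcc : ∀ j, constantCoeff (φ (X j)) = 0) : IsGraded w (linearizationEquiv φ hcc) :=
  isGraded_iff.mpr fun j => by simpa using (isGraded_iff.mp hφ j).linearPart

theorem isLinearAut_linearizationEquiv (φ : P ≃ₐ[R] P)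
    (hcc : ∀ j, constantCoeff (φ (X j)) = 0) : IsLinearAut (linearizationEquiv φ hcc) :=
  fun i => ⟨fun k => coeff (Finsupp.single k 1) (φ (X i)), by simp [linearPart_apply]⟩

theorem isGradedTame_one : IsGradedTame w (1 : P ≃ₐ[R] P) :=
  ⟨[], by simp, rfl⟩

theorem IsGradedTame.mul_left {e ψ : P ≃ₐ[R] P} (he : IsGraded w e)
    (he' : IsElementary e ∨ IsLinearAut e) (hψ : IsGradedTame w ψ) :
    IsGradedTame w (e * ψ) := by
  obtain ⟨l, hl, rfl⟩ := hψ
  exact ⟨e :: l, by simpa [he, he'] using hl, by simp⟩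

theorem isGradedTame_of_linearization_eq_id (hw : ∀ i, 0 < w i) (S : Finset (Fin n))
    (ψ : P ≃ₐ[R] P) (hψ : IsGraded w ψ)
    (hlin : linearization (ψ : P →ₐ[R] P) = AlgHom.id R P)
    (hfix : ∀ j ∉ S, ψ (X j) = X j) : IsGradedTame w ψ := by
  classical
  induction S using Finset.induction_on generalizing ψ with
  | empty =>
    have : ψ = 1 := AlgEquiv.coe_toAlgHom_injective
      (algHom_ext fun j => hfix j (Finset.notMem_empty j))
    exact this ▸ isGradedTame_one
  | insert i S hi ih =>
    set Q := ψ (X i) - X i with hQ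
    have hQw : Q.IsWeightedHomogeneous w (w i) :=
      (isGraded_iff.mp hψ i).sub (isWeightedHomogeneous_X R w i)
    have hQlin : linearPart Q = 0 := by
      have h := DFunLike.congr_fun hlin (X i)
      rw [linearization_X, AlgHom.id_apply, AlgEquiv.coe_toAlgHom] at h
      rw [hQ, map_sub, h, linearPart_X, sub_self]
    have hiQ : i ∉ Q.vars := fun h => lt_irrefl _ (hQw.weight_lt_of_mem_vars hw hQlin h)
    set e := elementaryEquiv i Q hiQ
    have he : IsGraded w e := isGraded_elementaryEquiv hiQ hQw
    have hfix' : ∀ j ∉ S, (e⁻¹ * ψ) (X j) = X j := by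
      intro j hj
      rw [AlgEquiv.mul_apply, AlgEquiv.aut_inv, AlgEquiv.symm_apply_eq]
      obtain rfl | hji := eq_or_ne j i
      · simp [e, Q]
      · simp [e, Function.update_of_ne hji, hfix j (by simp [hj, hji])]
    have htame := ih (e⁻¹ * ψ) (he.inv.mul hψ)
      (linearization_inv_mul_eq_id (fun i => (hw i).ne') he
        ((linearization_elementaryEquiv hiQ hQlin).trans hlin.symm)) hfix'
    simpa using htame.mul_left he (Or.inl (isElementary_elementaryEquiv i Q hiQ))

end Graded

theorem graded_automorphism_positive_grading_is_graded_tame_general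
    {K : Type*} [Field K] {n : ℕ}
    (w : Fin n → ℤ) (hw : ∀ i, 0 < w i)
    (φ : MvPolynomial (Fin n) K ≃ₐ[K] MvPolynomial (Fin n) K)
    (hφ : IsGraded w φ) :
    IsGradedTame w φ := by
  have hw₀ : ∀ i, w i ≠ 0 := fun i => (hw i).ne'
  have hcc := hφ.constantCoeff_X hw₀
  set L := linearizationEquiv φ hcc
  have hL : IsGraded w L := hφ.linearizationEquiv hcc
  have hψ : IsGradedTame w (L⁻¹ * φ) :=
    isGradedTame_of_linearization_eq_id hw Finset.univ _ (hL.inv.mul hφ)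
      (linearization_inv_mul_eq_id hw₀ hL (linearization_linearizationEquiv φ hcc))
      (by simp)
  simpa using hψ.mul_left hL (Or.inr (isLinearAut_linearizationEquiv φ hcc))

/-- If every variable has strictly positive degree, then every graded automorphism of
`K[x_1,…,x_n]` is graded-tame. -/
theorem graded_automorphism_positive_grading_is_graded_tame
    {K : Type*} [Field K] [IsAlgClosed K] [CharZero K] {n : ℕ}
    (w : Fin n → ℤ) (hw : ∀ i, 0 < w i)
    (φ : MvPolynomial (Fin n) K ≃ₐ[K] MvPolynomial (Fin n) K)
    (hφ : IsGraded w φ) :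
    IsGradedTame w φ :=
  graded_automorphism_positive_grading_is_graded_tame_general w hw φ hφ
end

section
/- Let φ be a K-algebra automorphism of K[x,y,z] with φ(x) = f, φ(y) = λ₁y, φ(z) = λ₂z for some nonzero λ₁, λ₂ ∈ K. Then f = λx + f₀(y,z), where λ ∈ K is nonzero and f₀ is a polynomial in y and z only. -/
/-!
Via `K[x,y,z] ≅ K[y,z][x]`, `φ` becomes a ring automorphism `Φ` of `R[x]`, `R = K[y,z]`, which
acts on the coefficients by the scaling `σ : y ↦ l₁ y, z ↦ l₂ z`. Hence `Φ p = (σ p) ∘ Φ x`, and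
`Φ (Φ⁻¹ x) = x` exhibits `x` as a composite with `Φ x` as inner polynomial. Over a domain, degrees
and leading coefficients multiply under composition, so `Φ x = a x + b` with `a` a unit of `R`,
i.e. a nonzero constant.
-/

open MvPolynomial

namespace Polynomial

variable {R : Type*} [CommRing R] [IsDomain R]

theorem exists_isUnit_eq_C_mul_X_add_C_of_comp_eq_X {p q : R[X]} (h : p.comp q = X) :
    ∃ a b : R, IsUnit a ∧ q = C a * X + C b := by
  have hdeg : p.natDegree * q.natDegree = 1 := by rw [← natDegree_comp, h, natDegree_X]
  have hp : p.natDegree = 1 := Nat.eq_one_of_mul_eq_one_right hdeg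
  have hq : q.natDegree = 1 := Nat.eq_one_of_mul_eq_one_left hdeg
  have hlead : p.leadingCoeff * q.leadingCoeff = 1 := by
    simpa [h, hp] using (leadingCoeff_comp (p := p) (hq.trans_ne one_ne_zero)).symm
  refine ⟨q.coeff 1, q.coeff 0, ?_, eq_X_add_C_of_natDegree_le_one hq.le⟩
  rw [← hq]
  exact IsUnit.of_mul_eq_one_right _ hlead

theorem exists_isUnit_apply_X_eq_C_mul_X_add_C (Φ : R[X] ≃+* R[X]) (σ : R →+* R)
    (hΦ : ∀ r, Φ (C r) = C (σ r)) : ∃ a b : R, IsUnit a ∧ Φ X = C a * X + C b := by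
  have hΦ_eq : ∀ p, Φ p = (p.map σ).comp (Φ X) := by
    have : (Φ : R[X] →+* R[X]) = (compRingHom (Φ X)).comp (mapRingHom σ) :=
      ringHom_ext (by simpa using hΦ) (by simp)
    exact fun p => congr($this p)
  refine exists_isUnit_eq_C_mul_X_add_C_of_comp_eq_X (p := (Φ.symm X).map σ) ?_
  rw [← hΦ_eq, Φ.apply_symm_apply]

end Polynomial

namespace MvPolynomial

variable {R : Type*} [CommSemiring R] {n : ℕ}

theorem finSuccEquiv_symm_C (p : MvPolynomial (Fin n) R) :
    (finSuccEquiv R n).symm (Polynomial.C p) = rename Fin.succ p := by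
  rw [AlgEquiv.symm_apply_eq]
  suffices ((finSuccEquiv R n).toAlgHom.comp (rename Fin.succ)) = Polynomial.CAlgHom from
    (congr($this p)).symm
  exact algHom_ext fun i => by simp [finSuccEquiv_X_succ]

theorem finSuccEquiv_symm_X : (finSuccEquiv R n).symm Polynomial.X = X 0 := by
  rw [AlgEquiv.symm_apply_eq, finSuccEquiv_X_zero]

theorem finSuccEquiv_apply_symm_C
    (φ : MvPolynomial (Fin (n + 1)) R →ₐ[R] MvPolynomial (Fin (n + 1)) R)
    (s : Fin n → MvPolynomial (Fin n) R) (hs : ∀ i, φ (X i.succ) = rename Fin.succ (s i))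
    (p : MvPolynomial (Fin n) R) :
    finSuccEquiv R n (φ ((finSuccEquiv R n).symm (Polynomial.C p))) = Polynomial.C (aeval s p) := by
  rw [finSuccEquiv_symm_C]
  suffices ((finSuccEquiv R n).toAlgHom.comp (φ.comp (rename Fin.succ))) =
      Polynomial.CAlgHom.comp (aeval s) from congr($this p)
  refine algHom_ext fun i => ?_
  simp [hs, ← finSuccEquiv_symm_C]

theorem zero_notMem_vars_rename_succ (p : MvPolynomial (Fin n) R) :
    (0 : Fin (n + 1)) ∉ (rename Fin.succ p).vars := by
  classical
  intro h
  obtain ⟨i, -, hi⟩ := Finset.mem_image.1 (vars_rename Fin.succ p h)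
  exact Fin.succ_ne_zero i hi

end MvPolynomial

theorem automorphism_fixing_y_z_up_to_scalar_general
    {K : Type*} [Field K]
    (φ : MvPolynomial (Fin 3) K ≃ₐ[K] MvPolynomial (Fin 3) K)
    (l₁ l₂ : K)
    (hy : φ (X 1) = C l₁ * X 1) (hz : φ (X 2) = C l₂ * X 2) :
    ∃ (l : K) (f₀ : MvPolynomial (Fin 3) K), l ≠ 0 ∧ (0 : Fin 3) ∉ f₀.vars ∧
      φ (X 0) = C l * X 0 + f₀ := by
  set e := finSuccEquiv K 2
  have hC := finSuccEquiv_apply_symm_C φ.toAlgHom ![C l₁ * X 0, C l₂ * X 1]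
    (Fin.forall_fin_two.2 ⟨by simpa using hy, by simpa using hz⟩)
  obtain ⟨a, b, ha, hX⟩ := Polynomial.exists_isUnit_apply_X_eq_C_mul_X_add_C
    ((e.symm.trans φ).trans e).toRingEquiv (aeval ![C l₁ * X 0, C l₂ * X 1]).toRingHom hC
  obtain ⟨l, hl, rfl⟩ := isUnit_iff_eq_C_of_isReduced.1 ha
  refine ⟨l, rename Fin.succ b, hl.ne_zero, zero_notMem_vars_rename_succ b, ?_⟩
  calc φ (X 0) = e.symm (e (φ (e.symm Polynomial.X))) := by
        rw [e.symm_apply_apply, finSuccEquiv_symm_X]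
    _ = C l * X 0 + rename Fin.succ b := by
        rw [show e (φ (e.symm Polynomial.X)) = _ from hX, map_add, map_mul,
          finSuccEquiv_symm_C, finSuccEquiv_symm_C, finSuccEquiv_symm_X, rename_C]

/-- If a `K`-algebra automorphism `φ` of `K[x,y,z]` satisfies `φ(y) = λ₁ y` and
`φ(z) = λ₂ z` with `λ₁, λ₂ ≠ 0`, then `φ(x) = λ x + f₀(y,z)` with `λ ≠ 0` and `f₀`
a polynomial in `y` and `z` only. Here `x = X 0`, `y = X 1`, `z = X 2`. -/
theorem automorphism_fixing_y_z_up_to_scalar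
    {K : Type*} [Field K] [IsAlgClosed K] [CharZero K]
    (φ : MvPolynomial (Fin 3) K ≃ₐ[K] MvPolynomial (Fin 3) K)
    (l₁ l₂ : K) (hl₁ : l₁ ≠ 0) (hl₂ : l₂ ≠ 0)
    (hy : φ (X 1) = C l₁ * X 1) (hz : φ (X 2) = C l₂ * X 2) :
    ∃ (l : K) (f₀ : MvPolynomial (Fin 3) K), l ≠ 0 ∧ (0 : Fin 3) ∉ f₀.vars ∧
      φ (X 0) = C l * X 0 + f₀ :=
  automorphism_fixing_y_z_up_to_scalar_general φ l₁ l₂ hy hz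
end

section
/- Let a, b, c be positive integers, let Γ be the Z-grading of K[x,y,z] with deg x = a, deg y = b, deg z = −c, and let φ be a Γ-graded automorphism with φ(z) = z, φ(x) = f, φ(y) = g. Then the pair f̃ = f(u,v,1), g̃ = g(u,v,1) defines an automorphism of K[u,v] that preserves the Z/cZ-grading Γ̃ with deg u = a mod c, deg v = b mod c; that is, every monomial u^i v^j occurring in f̃ satisfies ai + bj ≡ a (mod c) and every monomial u^i v^j occurring in g̃ satisfies ai + bj ≡ b (mod c). -/
open MvPolynomial

/-- For the `ℤ`-grading of `K[x,y,z]` with weights `w`, an automorphism is *graded*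
if it maps each homogeneous component into itself. -/
def IsGraded3 {K : Type*} [CommRing K] (w : Fin 3 → ℤ)
    (φ : MvPolynomial (Fin 3) K ≃ₐ[K] MvPolynomial (Fin 3) K) : Prop :=
  ∀ (d : ℤ) (f : MvPolynomial (Fin 3) K),
    f.IsWeightedHomogeneous w d → (φ f).IsWeightedHomogeneous w d

/-- For the `ℤ/cℤ`-grading of `K[u,v]` with weights `w`, an automorphism is *graded*
if it maps each homogeneous component into itself. -/
def IsGraded2 {K : Type*} [CommRing K] {c : ℕ} (w : Fin 2 → ZMod c)
    (φ : MvPolynomial (Fin 2) K ≃ₐ[K] MvPolynomial (Fin 2) K) : Prop :=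
  ∀ (d : ZMod c) (f : MvPolynomial (Fin 2) K),
    f.IsWeightedHomogeneous w d → (φ f).IsWeightedHomogeneous w d

/-- The restriction homomorphism `K[x,y,z] → K[u,v]`, `x ↦ u`, `y ↦ v`, `z ↦ 1`,
i.e. restriction of functions to the plane `z = 1`. -/
noncomputable def restrict (K : Type*) [CommRing K] :
    MvPolynomial (Fin 3) K →ₐ[K] MvPolynomial (Fin 2) K :=
  aeval ![X 0, X 1, 1]

/-! Setting `z = 1` sends a monomial `xⁱ yʲ zᵏ` of `(a, b, -c)`-degree `d` to `uⁱ vʲ`, whose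
`(a, b)`-degree is `≡ d (mod c)`; hence `f̃`, `g̃` are `Γ̃`-homogeneous of degrees `a`, `b`, and the
substitution they define preserves `Γ̃`. That substitution is `p ↦ φ(p(x, y))(u, v, 1)`, and
`τ ↦ (p ↦ τ(p(x, y))(u, v, 1))` is multiplicative on endomorphisms fixing `z`, so `φ⁻¹` induces
its inverse. -/

theorem MvPolynomial.IsWeightedHomogeneous.aeval {σ τ R M N : Type*} [CommSemiring R]
    [AddCommMonoid M] [AddCommMonoid N] {w : σ → M} {w' : τ → N} (f : M →+ N)
    {g : σ → MvPolynomial τ R} (hg : ∀ i, (g i).IsWeightedHomogeneous w' (f (w i)))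
    {p : MvPolynomial σ R} {d : M} (hp : p.IsWeightedHomogeneous w d) :
    (MvPolynomial.aeval g p).IsWeightedHomogeneous w' (f d) := by
  rw [p.as_sum, map_sum]
  refine IsWeightedHomogeneous.sum _ _ _ fun m hm => ?_
  have hdeg : f (Finsupp.weight w m) = ∑ i ∈ m.support, m i • f (w i) := by
    simp only [Finsupp.weight_apply, Finsupp.sum, map_sum, map_nsmul]
  rw [aeval_monomial, algebraMap_eq, ← hp (mem_support_iff.mp hm), hdeg]
  exact (IsWeightedHomogeneous.prod m.support _ _ fun i _ => (hg i).pow (m i)).C_mul _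

theorem isGraded2_of_isWeightedHomogeneous_X {K : Type*} [CommRing K] {c : ℕ}
    {w : Fin 2 → ZMod c} {ψ : MvPolynomial (Fin 2) K ≃ₐ[K] MvPolynomial (Fin 2) K}
    (hψ : ∀ i, (ψ (X i)).IsWeightedHomogeneous w (w i)) : IsGraded2 w ψ := by
  intro d p hp
  rw [← AlgEquiv.coe_toAlgHom, aeval_unique ψ.toAlgHom]
  exact hp.aeval (AddMonoidHom.id _) hψ

section Restrict

variable {K : Type*} [CommRing K]

theorem restrict_isWeightedHomogeneous (a b c : ℕ) {p : MvPolynomial (Fin 3) K} {d : ℤ}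
    (hp : p.IsWeightedHomogeneous ![(a : ℤ), (b : ℤ), -(c : ℤ)] d) :
    (restrict K p).IsWeightedHomogeneous ![(a : ZMod c), (b : ZMod c)] (d : ZMod c) :=
  hp.aeval (g := ![X 0, X 1, 1]) (Int.castAddHom (ZMod c)) fun i => by
    fin_cases i
    · simpa using isWeightedHomogeneous_X K ![(a : ZMod c), (b : ZMod c)] 0
    · simpa using isWeightedHomogeneous_X K ![(a : ZMod c), (b : ZMod c)] 1
    · simpa using isWeightedHomogeneous_one K ![(a : ZMod c), (b : ZMod c)]

theorem restrict_comp_rename_castSucc :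
    (restrict K).comp (rename Fin.castSucc) = AlgHom.id K (MvPolynomial (Fin 2) K) := by
  ext i : 1
  fin_cases i <;> simp [restrict]

/-- `rename Fin.castSucc ∘ restrict` only replaces `z` by `1`, which `restrict ∘ τ` does not see
when `τ` fixes `z`. -/
theorem restrict_comp_rename_castSucc_comp_restrict
    {τ : MvPolynomial (Fin 3) K →ₐ[K] MvPolynomial (Fin 3) K} (hτ : τ (X 2) = X 2) :
    ((restrict K).comp τ).comp ((rename Fin.castSucc).comp (restrict K)) =
      (restrict K).comp τ := by
  ext i : 1
  fin_cases i <;> simp [restrict, hτ]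

noncomputable def planeMap (τ : MvPolynomial (Fin 3) K →ₐ[K] MvPolynomial (Fin 3) K) :
    MvPolynomial (Fin 2) K →ₐ[K] MvPolynomial (Fin 2) K :=
  ((restrict K).comp τ).comp (rename Fin.castSucc)

theorem planeMap_X (τ : MvPolynomial (Fin 3) K →ₐ[K] MvPolynomial (Fin 3) K) (i : Fin 2) :
    planeMap τ (X i) = restrict K (τ (X i.castSucc)) := by
  simp [planeMap]

theorem planeMap_id : planeMap (AlgHom.id K (MvPolynomial (Fin 3) K)) = AlgHom.id K _ :=
  restrict_comp_rename_castSucc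

theorem planeMap_comp {τ σ : MvPolynomial (Fin 3) K →ₐ[K] MvPolynomial (Fin 3) K}
    (hτ : τ (X 2) = X 2) : planeMap (τ.comp σ) = (planeMap τ).comp (planeMap σ) := by
  ext i : 1
  exact (DFunLike.congr_fun (restrict_comp_rename_castSucc_comp_restrict hτ) _).symm

noncomputable def planeEquiv (φ : MvPolynomial (Fin 3) K ≃ₐ[K] MvPolynomial (Fin 3) K)
    (hφ : φ (X 2) = X 2) : MvPolynomial (Fin 2) K ≃ₐ[K] MvPolynomial (Fin 2) K :=
  have hφ' : φ.symm (X 2) = X 2 := φ.symm_apply_eq.mpr hφ.symm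
  AlgEquiv.ofAlgHom (planeMap φ) (planeMap φ.symm)
    (by rw [← planeMap_comp hφ, AlgEquiv.comp_symm, planeMap_id])
    (by rw [← planeMap_comp hφ', AlgEquiv.symm_comp, planeMap_id])

@[simp]
theorem planeEquiv_X (φ : MvPolynomial (Fin 3) K ≃ₐ[K] MvPolynomial (Fin 3) K)
    (hφ : φ (X 2) = X 2) (i : Fin 2) :
    planeEquiv φ hφ (X i) = restrict K (φ (X i.castSucc)) :=
  planeMap_X _ i

end Restrict

theorem restriction_of_graded_automorphism_is_graded_automorphism_of_plane_general
    {K : Type*} [Field K]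
    (a b c : ℕ)
    (φ : MvPolynomial (Fin 3) K ≃ₐ[K] MvPolynomial (Fin 3) K)
    (hφ : IsGraded3 ![(a : ℤ), (b : ℤ), -(c : ℤ)] φ)
    (hz : φ (X 2) = X 2) :
    (∃ ψ : MvPolynomial (Fin 2) K ≃ₐ[K] MvPolynomial (Fin 2) K,
        ψ (X 0) = restrict K (φ (X 0)) ∧ ψ (X 1) = restrict K (φ (X 1)) ∧
        IsGraded2 ![(a : ZMod c), (b : ZMod c)] ψ) ∧
    (restrict K (φ (X 0))).IsWeightedHomogeneous ![(a : ZMod c), (b : ZMod c)] (a : ZMod c) ∧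
    (restrict K (φ (X 1))).IsWeightedHomogeneous ![(a : ZMod c), (b : ZMod c)] (b : ZMod c) := by
  have hf : (restrict K (φ (X 0))).IsWeightedHomogeneous ![(a : ZMod c), (b : ZMod c)] a := by
    simpa only [Int.cast_natCast] using
      restrict_isWeightedHomogeneous a b c (hφ a (X 0) (isWeightedHomogeneous_X K _ 0))
  have hg : (restrict K (φ (X 1))).IsWeightedHomogeneous ![(a : ZMod c), (b : ZMod c)] b := by
    simpa only [Int.cast_natCast] using
      restrict_isWeightedHomogeneous a b c (hφ b (X 1) (isWeightedHomogeneous_X K _ 1))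
  refine ⟨⟨planeEquiv φ hz, planeEquiv_X φ hz 0, planeEquiv_X φ hz 1, ?_⟩, hf, hg⟩
  refine isGraded2_of_isWeightedHomogeneous_X fun i => ?_
  fin_cases i
  · simpa using hf
  · simpa using hg

/-- Let `Γ` be the `ℤ`-grading of `K[x,y,z]` with `deg x = a`, `deg y = b`,
`deg z = -c`, `a, b, c > 0`, and let `φ` be a graded automorphism fixing `z`.
Then `f̃ = φ(x)(u,v,1)`, `g̃ = φ(y)(u,v,1)` define an automorphism of `K[u,v]` preserving
the `ℤ/cℤ`-grading `Γ̃` with `deg u = a mod c`, `deg v = b mod c`; that is, every monomial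
`uⁱvʲ` of `f̃` satisfies `ai + bj ≡ a (mod c)`, and every monomial `uⁱvʲ` of `g̃`
satisfies `ai + bj ≡ b (mod c)`. Here `x = X 0`, `y = X 1`, `z = X 2`, `u = X 0`, `v = X 1`. -/
theorem restriction_of_graded_automorphism_is_graded_automorphism_of_plane
    {K : Type*} [Field K] [IsAlgClosed K] [CharZero K]
    (a b c : ℕ) (ha : 0 < a) (hb : 0 < b) (hc : 0 < c)
    (φ : MvPolynomial (Fin 3) K ≃ₐ[K] MvPolynomial (Fin 3) K)
    (hφ : IsGraded3 ![(a : ℤ), (b : ℤ), -(c : ℤ)] φ)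
    (hz : φ (X 2) = X 2) :
    (∃ ψ : MvPolynomial (Fin 2) K ≃ₐ[K] MvPolynomial (Fin 2) K,
        ψ (X 0) = restrict K (φ (X 0)) ∧ ψ (X 1) = restrict K (φ (X 1)) ∧
        IsGraded2 ![(a : ZMod c), (b : ZMod c)] ψ) ∧
    (restrict K (φ (X 0))).IsWeightedHomogeneous ![(a : ZMod c), (b : ZMod c)] (a : ZMod c) ∧
    (restrict K (φ (X 1))).IsWeightedHomogeneous ![(a : ZMod c), (b : ZMod c)] (b : ZMod c) :=
  restriction_of_graded_automorphism_is_graded_automorphism_of_plane_general a b c φ hφ hz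
end

section
/- Let a ≥ b be positive integers and c a positive integer with gcd(a,c) = gcd(b,c) = 1, let Γ be the Z-grading of K[x,y,z] with deg x = a, deg y = b, deg z = −c, and let q̂ = max{q ∈ Z : bq ≡ a (mod c) and bq < a}. Fix a positive integer q with bq ≡ a (mod c) and a nonzero λ ∈ K, and consider the Γ̃-graded automorphism φ̃ = (u + λv^q, v) of K[u,v]. Then φ̃ lifts to a Γ-graded automorphism of K[x,y,z] of the form (x + λ y^q z^t, y, z) with t ≥ 0 if and only if q > q̂. -/
open MvPolynomial

theorem isWeightedHomogeneous_pow' {σ R M : Type*} [CommSemiring R] [AddCommMonoid M]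
    {w : σ → M} {f : MvPolynomial σ R} {m : M}
    (hf : f.IsWeightedHomogeneous w m) (n : ℕ) :
    (f ^ n).IsWeightedHomogeneous w (n • m) := by
  induction n with
  | zero => simpa using isWeightedHomogeneous_one R w
  | succ k ih =>
    rw [pow_succ, succ_nsmul]
    exact ih.mul hf

theorem isWeightedHomogeneous_aeval' {σ R M : Type*} [CommSemiring R] [AddCommMonoid M]
    {w : σ → M} (g : σ → MvPolynomial σ R)
    (hg : ∀ i, (g i).IsWeightedHomogeneous w (w i))
    {f : MvPolynomial σ R} {d : M} (hf : f.IsWeightedHomogeneous w d) :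
    ((aeval g) f).IsWeightedHomogeneous w d := by
  classical
  rw [← mem_weightedHomogeneousSubmodule]
  rw [f.as_sum, map_sum]
  apply Submodule.sum_mem
  intro m hm
  rw [mem_weightedHomogeneousSubmodule, aeval_monomial]
  have h1 : (Finsupp.prod m fun i e => g i ^ e).IsWeightedHomogeneous w
      (∑ i ∈ m.support, m i • w i) := by
    rw [Finsupp.prod]
    exact IsWeightedHomogeneous.prod _ _ _ (fun i _ => isWeightedHomogeneous_pow' (hg i) (m i))
  have h2 := (isWeightedHomogeneous_C w (coeff m f)).mul h1
  rw [zero_add] at h2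
  have h3 : (∑ i ∈ m.support, m i • w i) = d := by
    rw [← hf (mem_support_iff.mp hm), Finsupp.weight_apply, Finsupp.sum]
  rw [h3] at h2
  simpa [algebraMap_eq] using h2

theorem aux_term_homog {K : Type*} [Field K]
    (a b c : ℕ) (q t : ℕ) (l : K)
    (key : (b:ℤ) * q = a + c * t) :
    (C l * X 1 ^ q * X 2 ^ t : MvPolynomial (Fin 3) K).IsWeightedHomogeneous
      ![(a : ℤ), (b : ℤ), -(c : ℤ)] (a : ℤ) := by
  have h1 := isWeightedHomogeneous_pow'
    (isWeightedHomogeneous_X K ![(a : ℤ), (b : ℤ), -(c : ℤ)] 1) q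
  have h2 := isWeightedHomogeneous_pow'
    (isWeightedHomogeneous_X K ![(a : ℤ), (b : ℤ), -(c : ℤ)] 2) t
  have h := (isWeightedHomogeneous_C ![(a : ℤ), (b : ℤ), -(c : ℤ)] l).mul (h1.mul h2)
  have he : (0 : ℤ) + (q • ![(a : ℤ), (b : ℤ), -(c : ℤ)] 1 + t • ![(a : ℤ), (b : ℤ), -(c : ℤ)] 2)
      = (a : ℤ) := by
    show (0:ℤ) + (q • (b:ℤ) + t • (-(c:ℤ))) = (a:ℤ)
    simp [nsmul_eq_mul]
    linarith
  rw [he, ← mul_assoc] at h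
  exact h

theorem aux_coeff {K : Type*} [Field K] (q t : ℕ) (l : K) (hq : 0 < q) :
    coeff (Finsupp.single 1 q + Finsupp.single 2 t)
      (X 0 + C l * X 1 ^ q * X 2 ^ t : MvPolynomial (Fin 3) K) = l := by
  rw [coeff_add, C_apply, X_pow_eq_monomial, X_pow_eq_monomial, monomial_mul, monomial_mul,
    coeff_monomial, zero_add, mul_one, mul_one, if_pos rfl, coeff_X', if_neg, zero_add]
  intro h
  have := congrArg (fun f => f 1) h
  simp [Finsupp.single_apply] at this
  exact hq.ne' this.symm

theorem aux_weight (a b c q t : ℕ) (h : Finsupp.weight ![(a : ℤ), (b : ℤ), -(c : ℤ)]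
    (Finsupp.single 1 q + Finsupp.single 2 t) = (a : ℤ)) : (b:ℤ) * q = a + c * t := by
  rw [map_add, Finsupp.weight_apply, Finsupp.weight_apply,
    Finsupp.sum_single_index (by simp), Finsupp.sum_single_index (by simp)] at h
  have e1 : (![(a : ℤ), (b : ℤ), -(c : ℤ)] 1) = (b:ℤ) := rfl
  have e2 : (![(a : ℤ), (b : ℤ), -(c : ℤ)] 2) = -(c:ℤ) := rfl
  rw [e1, e2, nsmul_eq_mul, nsmul_eq_mul] at h
  linarith

/-- Let `a ≥ b > 0`, `c > 0` with `gcd(a,c) = gcd(b,c) = 1`, let `Γ` be the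
`ℤ`-grading of `K[x,y,z]` with `deg x = a`, `deg y = b`, `deg z = -c`, and let
`q̂ = max {q ∈ ℤ : bq ≡ a (mod c), bq < a}`. Fix a positive integer `q` with
`bq ≡ a (mod c)` and `λ ≠ 0`. Then the `Γ̃`-graded automorphism `(u + λ v^q, v)` of
`K[u,v]` lifts to a `Γ`-graded automorphism `(x + λ y^q z^t, y, z)` of `K[x,y,z]` with
`t ≥ 0` if and only if `q > q̂`. Here `x = X 0`, `y = X 1`, `z = X 2`. -/
theorem elementary_lift_exists_iff_gt_qhat
    {K : Type*} [Field K] [IsAlgClosed K] [CharZero K]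
    (a b c : ℕ) (ha : 0 < a) (hb : 0 < b) (hc : 0 < c) (hab : b ≤ a)
    (hac : Nat.gcd a c = 1) (hbc : Nat.gcd b c = 1)
    (qhat : ℤ)
    (hqhat : IsGreatest {q : ℤ | (b : ℤ) * q ≡ (a : ℤ) [ZMOD (c : ℤ)] ∧ (b : ℤ) * q < (a : ℤ)} qhat)
    (q : ℕ) (hq : 0 < q) (hqc : (b : ℤ) * (q : ℤ) ≡ (a : ℤ) [ZMOD (c : ℤ)])
    (l : K) (hl : l ≠ 0) :
    (∃ (t : ℕ) (φ : MvPolynomial (Fin 3) K ≃ₐ[K] MvPolynomial (Fin 3) K),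
        IsGraded3 ![(a : ℤ), (b : ℤ), -(c : ℤ)] φ ∧
        φ (X 0) = X 0 + C l * X 1 ^ q * X 2 ^ t ∧ φ (X 1) = X 1 ∧ φ (X 2) = X 2) ↔
      qhat < (q : ℤ) := by
  constructor
  · rintro ⟨t, φ, hgr, hφx, -, -⟩
    have hx : (X 0 : MvPolynomial (Fin 3) K).IsWeightedHomogeneous
        ![(a : ℤ), (b : ℤ), -(c : ℤ)] ((a : ℤ)) := by
      have := isWeightedHomogeneous_X K ![(a : ℤ), (b : ℤ), -(c : ℤ)] (0 : Fin 3)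
      simpa using this
    have h := hgr a (X 0) hx
    rw [hφx] at h
    have hcoef : coeff (Finsupp.single 1 q + Finsupp.single 2 t)
        (X 0 + C l * X 1 ^ q * X 2 ^ t : MvPolynomial (Fin 3) K) ≠ 0 := by
      rw [aux_coeff q t l hq]; exact hl
    have hw := h hcoef
    have key := aux_weight a b c q t hw
    have hle : (a : ℤ) ≤ (b:ℤ) * q := by
      have : (0:ℤ) ≤ (c:ℤ) * t := by positivity
      linarith
    exact lt_of_mul_lt_mul_left (lt_of_lt_of_le hqhat.1.2 hle) (by positivity)
  · intro hlt
    -- first, a ≤ b * q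
    have hle : (a : ℤ) ≤ (b:ℤ) * q := by
      by_contra h'
      push_neg at h'
      exact absurd (hqhat.2 ⟨hqc, h'⟩) (not_le.mpr hlt)
    obtain ⟨k, hk⟩ : (c:ℤ) ∣ (b:ℤ) * q - a := hqc.symm.dvd
    have hk0 : 0 ≤ k := by
      by_contra hk0
      push_neg at hk0
      nlinarith [hk, hle, (Int.natCast_pos.mpr hc : (0:ℤ) < c)]
    set t : ℕ := k.toNat with ht
    have key : (b:ℤ) * q = a + c * t := by
      have : (t:ℤ) = k := Int.toNat_of_nonneg hk0
      rw [this]; linarith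
    refine ⟨t, ?_⟩
    set gv : Fin 3 → MvPolynomial (Fin 3) K := ![X 0 + C l * X 1 ^ q * X 2 ^ t, X 1, X 2] with hgv
    set gw : Fin 3 → MvPolynomial (Fin 3) K := ![X 0 - C l * X 1 ^ q * X 2 ^ t, X 1, X 2] with hgw
    have h1 : (aeval gv).comp (aeval gw) = AlgHom.id K (MvPolynomial (Fin 3) K) := by
      apply algHom_ext; intro i; fin_cases i <;> simp [hgv, hgw]
    have h2 : (aeval gw).comp (aeval gv) = AlgHom.id K (MvPolynomial (Fin 3) K) := by
      apply algHom_ext; intro i; fin_cases i <;> simp [hgv, hgw]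
    refine ⟨AlgEquiv.ofAlgHom (aeval gv) (aeval gw) h1 h2, ?_, ?_, ?_, ?_⟩
    · intro d f hf
      have hφf : (AlgEquiv.ofAlgHom (aeval gv) (aeval gw) h1 h2) f = aeval gv f := rfl
      rw [hφf]
      refine isWeightedHomogeneous_aeval' gv ?_ hf
      intro i
      have hX0 : (X 0 : MvPolynomial (Fin 3) K).IsWeightedHomogeneous
          ![(a : ℤ), (b : ℤ), -(c : ℤ)] ((a : ℤ)) := by
        simpa using isWeightedHomogeneous_X K ![(a : ℤ), (b : ℤ), -(c : ℤ)] (0 : Fin 3)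
      have h0 : (gv 0).IsWeightedHomogeneous ![(a : ℤ), (b : ℤ), -(c : ℤ)]
          (![(a : ℤ), (b : ℤ), -(c : ℤ)] 0) := by
        show (X 0 + C l * X 1 ^ q * X 2 ^ t : MvPolynomial (Fin 3) K).IsWeightedHomogeneous
          ![(a : ℤ), (b : ℤ), -(c : ℤ)] ((a : ℤ))
        exact hX0.add (aux_term_homog a b c q t l key)
      have h1' : (gv 1).IsWeightedHomogeneous ![(a : ℤ), (b : ℤ), -(c : ℤ)]
          (![(a : ℤ), (b : ℤ), -(c : ℤ)] 1) :=
        isWeightedHomogeneous_X K ![(a : ℤ), (b : ℤ), -(c : ℤ)] (1 : Fin 3)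
      have h2' : (gv 2).IsWeightedHomogeneous ![(a : ℤ), (b : ℤ), -(c : ℤ)]
          (![(a : ℤ), (b : ℤ), -(c : ℤ)] 2) :=
        isWeightedHomogeneous_X K ![(a : ℤ), (b : ℤ), -(c : ℤ)] (2 : Fin 3)
      fin_cases i
      · exact h0
      · exact h1'
      · exact h2'
    · show aeval gv (X 0) = _
      simp [hgv]
    · show aeval gv (X 1) = _
      simp [hgv]
    · show aeval gv (X 2) = _
      simp [hgv]
end
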